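/- For partitions X and Y of a finite set, X is refined by Y if and only if for every probability distribution μ, the conditional entropy H(X | Y) equals 0 (Shannon's information order coincides with the refinement order on the lattice of information). -/

import Mathlib

open Finset

variable {σ : Type*} [Fintype σ] [DecidableEq σ]

/-- A probability distribution on a finite type. -/
def IsDist (μ : σ → ℝ) : Prop := (∀ x, 0 ≤ μ x) ∧ ∑ x, μ x = 1

/-- `Refines X Y` : `X ⊑ Y`, i.e. every block of `Y` is contained in some block of `X`. -/
def Refines (X Y : Finpartition (univ : Finset σ)) : Prop :=
  ∀ B ∈ Y.parts, ∃ C ∈ X.parts, B ⊆ C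

/-- The common refinement (the paper's join `X ⊔ Y`). -/
def pJoin (X Y : Finpartition (univ : Finset σ)) : Finpartition (univ : Finset σ) := X ⊓ Y

/-- The setoid associated to a finpartition. -/
def toSetoid (X : Finpartition (univ : Finset σ)) : Setoid σ where
  r x y := ∃ B ∈ X.parts, x ∈ B ∧ y ∈ B
  iseqv := by
    constructor
    · intro x
      obtain ⟨B, hB, hx⟩ := X.exists_mem (mem_univ x)
      exact ⟨B, hB, hx, hx⟩
    · rintro x y ⟨B, hB, hx, hy⟩; exact ⟨B, hB, hy, hx⟩
    · rintro x y z ⟨B, hB, hx, hy⟩ ⟨C, hC, hy', hz⟩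
      exact ⟨B, hB, hx, X.eq_of_mem_parts hC hB hy' hy ▸ hz⟩

/-- The coarsest common coarsening (the paper's meet `X ⊓ Y`). -/
noncomputable def pMeet (X Y : Finpartition (univ : Finset σ)) : Finpartition (univ : Finset σ) :=
  letI : DecidableRel (toSetoid X ⊔ toSetoid Y).r := Classical.decRel _
  Finpartition.ofSetoid (toSetoid X ⊔ toSetoid Y)

/-- Sum of the `n` largest `μ`-probabilities among the elements of `B`. -/
def gGuess (μ : σ → ℝ) (n : ℕ) (B : Finset σ) : ℝ :=
  (B.powerset.filter fun S => S.card ≤ n).sup' ⟨∅, by simp⟩ fun S => ∑ x ∈ S, μ x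

/-- Expected probability of guessing in `n` tries given partition `X`. -/
def GGuess (μ : σ → ℝ) (n : ℕ) (X : Finpartition (univ : Finset σ)) : ℝ :=
  ∑ B ∈ X.parts, gGuess μ n B

/-- Expected number of guesses for a block `B` (elements asked in order of
decreasing probability, i.e. the ordering minimising the expected rank). -/
noncomputable def NGset (μ : σ → ℝ) (B : Finset σ) : ℝ :=
  ⨅ e : B ≃ Fin B.card, ∑ x ∈ B.attach, ((e x : ℕ) + 1 : ℝ) * μ x

/-- Expected number of guesses given a partition. -/
noncomputable def NGpart (μ : σ → ℝ) (X : Finpartition (univ : Finset σ)) : ℝ :=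
  ∑ B ∈ X.parts, NGset μ B

/-- Shannon entropy (base 2) of the block distribution induced by `μ` on `X`. -/
noncomputable def entropy (μ : σ → ℝ) (X : Finpartition (univ : Finset σ)) : ℝ :=
  - ∑ B ∈ X.parts, (∑ x ∈ B, μ x) * Real.logb 2 (∑ x ∈ B, μ x)

/-- Conditional entropy `H(X|Y) = H(X ⊔ Y) - H(Y)`. -/
noncomputable def condEntropy (μ : σ → ℝ) (X Y : Finpartition (univ : Finset σ)) : ℝ :=
  entropy μ (pJoin X Y) - entropy μ Y

/-- Mutual information `I(X;Y) = H(X) + H(Y) - H(X ⊔ Y)`. -/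
noncomputable def mutualInfo (μ : σ → ℝ) (X Y : Finpartition (univ : Finset σ)) : ℝ :=
  entropy μ X + entropy μ Y - entropy μ (pJoin X Y)

/-- Maximum probability in a block. -/
noncomputable def fmax (μ : σ → ℝ) (B : Finset σ) : ℝ := ((B.image μ).max).unbotD 0

/-- Min-entropy leakage of a partition. -/
noncomputable def MEleak (μ : σ → ℝ) (X : Finpartition (univ : Finset σ)) : ℝ :=
  Real.logb 2 (∑ B ∈ X.parts, fmax μ B) - Real.logb 2 (fmax μ (univ : Finset σ))

/-- Kernel partition of a function on a finite type. -/
def kerP {O : Type*} [DecidableEq O] (f : σ → O) : Finpartition (univ : Finset σ) :=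
  letI : DecidableRel (Setoid.ker f).r := fun a b => decEq (f a) (f b)
  Finpartition.ofSetoid (Setoid.ker f)

/-!
If `Y` refines `X`, the common refinement `X ⊔ Y` is `Y` itself, so `H(X|Y) = 0` for every `μ`.
Otherwise some block of `Y` contains two points `x`, `y` lying in different blocks of `X`, hence
in different blocks of `X ⊔ Y`. For the uniform distribution on `{x, y}` the variable `Y` is
constant while `X ⊔ Y` is a fair coin, so `H(X|Y) = 1 - 0 ≠ 0`.
-/

namespace Finpartition

variable {α : Type*} [DecidableEq α] {s : Finset α} {P Q : Finpartition s} {a b : α}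

lemma part_subset_part_of_le (h : P ≤ Q) (ha : a ∈ s) : P.part a ⊆ Q.part a := by
  obtain ⟨C, hC, hPC⟩ := h (P.part_mem.2 ha)
  rwa [Q.part_eq_of_mem hC (hPC (P.mem_part ha))]

lemma part_ne_part_of_le (h : P ≤ Q) (ha : a ∈ s) (hb : b ∈ s) (hQ : Q.part a ≠ Q.part b) :
    P.part a ≠ P.part b := by
  intro hP
  have hbQa : b ∈ Q.part a := part_subset_part_of_le h ha (hP ▸ P.mem_part hb)
  exact hQ ((Q.mem_part_iff_part_eq_part hb ha).1 hbQa).symm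

lemma exists_part_eq_part_and_ne_of_not_le (h : ¬ P ≤ Q) :
    ∃ a ∈ s, ∃ b ∈ s, P.part a = P.part b ∧ Q.part a ≠ Q.part b := by
  obtain ⟨B, hB, hBQ⟩ : ∃ B ∈ P.parts, ∀ C ∈ Q.parts, ¬ B ⊆ C := by
    simpa [LE.le] using h
  obtain ⟨a, haB⟩ := P.nonempty_of_mem_parts hB
  have ha : a ∈ s := P.le hB haB
  obtain ⟨b, hbB, hbQa⟩ := not_subset.1 (hBQ _ (Q.part_mem.2 ha))
  have hb : b ∈ s := P.le hB hbB
  refine ⟨a, ha, b, hb, ?_, fun hQ => hbQa (hQ ▸ Q.mem_part hb)⟩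
  rw [P.part_eq_of_mem hB haB, P.part_eq_of_mem hB hbB]

end Finpartition

section UniformPair

variable {α : Type*} [DecidableEq α]

/-- The uniform distribution on `{x, y}` (a point mass when `x = y`). -/
noncomputable def uniformPair (x y : α) : α → ℝ := Pi.single x (1 / 2) + Pi.single y (1 / 2)

lemma sum_uniformPair (x y : α) (B : Finset α) :
    ∑ a ∈ B, uniformPair x y a = (if x ∈ B then 1 / 2 else 0) + (if y ∈ B then 1 / 2 else 0) := by
  simp [uniformPair, sum_add_distrib]

end UniformPair

section

variable {X Y P : Finpartition (univ : Finset σ)}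

lemma refines_iff_le : Refines X Y ↔ Y ≤ X := Iff.rfl

lemma condEntropy_eq_zero_of_le (μ : σ → ℝ) (h : Y ≤ X) : condEntropy μ X Y = 0 := by
  rw [condEntropy, pJoin, inf_eq_right.2 h, sub_self]

lemma isDist_uniformPair (x y : σ) : IsDist (uniformPair x y) := by
  refine ⟨fun a => ?_, ?_⟩
  · simp only [uniformPair, Pi.add_apply, Pi.single_apply]
    positivity
  · rw [sum_uniformPair]
    norm_num

lemma sum_uniformPair_of_mem_parts (x y : σ) {C : Finset σ} (hC : C ∈ P.parts) :
    ∑ a ∈ C, uniformPair x y a =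
      (if P.part x = C then 1 / 2 else 0) + (if P.part y = C then 1 / 2 else 0) := by
  simp only [sum_uniformPair, P.part_eq_iff_mem hC]

lemma entropy_uniformPair_of_part_eq {x y : σ} (h : P.part x = P.part y) :
    entropy (uniformPair x y) P = 0 := by
  rw [entropy, neg_eq_zero]
  refine sum_eq_zero fun C hC => ?_
  rw [sum_uniformPair_of_mem_parts x y hC, h]
  split_ifs <;> norm_num

lemma entropy_uniformPair_of_part_ne {x y : σ} (h : P.part x ≠ P.part y) :
    entropy (uniformPair x y) P = 1 := by
  have hlog : Real.logb 2 (1 / 2) = -1 := by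
    rw [one_div, Real.logb_inv, Real.logb_self_eq_one one_lt_two]
  rw [entropy, sum_eq_add_of_mem (P.part x) (P.part y) (P.part_mem.2 (mem_univ x))
    (P.part_mem.2 (mem_univ y)) h]
  · simp only [sum_uniformPair_of_mem_parts x y (P.part_mem.2 (mem_univ _)), h, h.symm]
    norm_num [hlog]
  · intro C hC hCxy
    rw [sum_uniformPair_of_mem_parts x y hC, if_neg (Ne.symm hCxy.1), if_neg (Ne.symm hCxy.2)]
    norm_num

end

theorem refines_iff_forall_condEntropy_eq_zero (X Y : Finpartition (univ : Finset σ)) :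
    Refines X Y ↔ ∀ μ : σ → ℝ, IsDist μ → condEntropy μ X Y = 0 := by
  refine ⟨fun h μ _ => condEntropy_eq_zero_of_le μ (refines_iff_le.1 h), fun h => ?_⟩
  by_contra hXY
  obtain ⟨x, -, y, -, hY, hX⟩ :=
    Finpartition.exists_part_eq_part_and_ne_of_not_le (mt refines_iff_le.2 hXY)
  have hJoin : (pJoin X Y).part x ≠ (pJoin X Y).part y :=
    Finpartition.part_ne_part_of_le inf_le_left (mem_univ x) (mem_univ y) hX
  have h01 := h _ (isDist_uniformPair x y)
  rw [condEntropy, entropy_uniformPair_of_part_ne hJoin, entropy_uniformPair_of_part_eq hY] at h01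
  norm_num at h01
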